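/- arXiv:1505.07625 — 2 statements merged into one kernel-verified Lean document; each statement's English description precedes it below -/
import Mathlib

section
/- Let E be a finite-dimensional real inner product space, let p ≥ 2 and b > 0 be real numbers, and let β : E → ℝ be a twice continuously differentiable function with ‖∇β(x)‖ = 1 for every x ∈ E. Then the function g = e^{bβ} satisfies, at every point x ∈ E, the identity Δ_p g (x) = b^{p-1} e^{b(p-1)β(x)} ( Δβ(x) + b(p-1) ), where Δβ is the Laplacian of β. -/
open Real RealInnerProductSpace

/-- The divergence of a vector field `X : E → E` at `x`: the trace of its Fréchet
derivative at `x`. -/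
noncomputable def vectorDiv {E : Type*} [NormedAddCommGroup E] [InnerProductSpace ℝ E]
    (X : E → E) (x : E) : ℝ :=
  LinearMap.trace ℝ E (fderiv ℝ X x : E →ₗ[ℝ] E)

/-- The `p`-Laplacian `Δ_p u = div(‖∇u‖^{p-2} ∇u)`. -/
noncomputable def pLaplacian {E : Type*} [NormedAddCommGroup E] [InnerProductSpace ℝ E]
    [CompleteSpace E] (p : ℝ) (u : E → ℝ) : E → ℝ :=
  vectorDiv (fun x => ‖gradient u x‖ ^ (p - 2) • gradient u x)

/-- The Laplacian `Δu = div(∇u)`. -/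
noncomputable def laplacian {E : Type*} [NormedAddCommGroup E] [InnerProductSpace ℝ E]
    [CompleteSpace E] (u : E → ℝ) : E → ℝ :=
  vectorDiv (gradient u)

/-!
If `‖∇β‖ = 1` and `φ' > 0`, then `∇(φ ∘ β) = φ'(β) • ∇β` has length `φ'(β)`, so the `p`-Laplacian
field of `φ ∘ β` is `φ'(β) ^ (p - 1) • ∇β`. The product rule for the divergence then gives
`Δ_p (φ ∘ β) = φ'(β) ^ (p - 1) * Δβ + (p - 1) * φ'(β) ^ (p - 2) * φ''(β)`, and for
`φ t = exp (b * t)` we have `φ'' = b * φ'`.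
-/

open InnerProductSpace
open scoped Gradient

section

variable {E : Type*} [NormedAddCommGroup E] [InnerProductSpace ℝ E]

theorem HasDerivAt.comp_hasGradientAt [CompleteSpace E] {φ : ℝ → ℝ} {φ' : ℝ} {f : E → ℝ}
    {g x : E} (hφ : HasDerivAt φ φ' (f x)) (hf : HasGradientAt f g x) :
    HasGradientAt (φ ∘ f) (φ' • g) x := by
  rw [hasGradientAt_iff_hasFDerivAt, map_smul]
  exact hφ.comp_hasFDerivAt x (hasGradientAt_iff_hasFDerivAt.mp hf)

theorem ContDiff.differentiable_gradient [CompleteSpace E] {f : E → ℝ} (hf : ContDiff ℝ 2 f) :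
    Differentiable ℝ (∇ f) :=
  (toDual ℝ E).symm.differentiable.comp ((hf.fderiv_right (by norm_num)).differentiable one_ne_zero)

theorem Real.rpow_sub_two_mul_self {a : ℝ} (ha : a ≠ 0) (p : ℝ) :
    a ^ (p - 2) * a = a ^ (p - 1) := by
  rw [← rpow_add_one ha]
  ring_nf

theorem rpow_norm_smul_smul_of_norm_eq_one {a : ℝ} (ha : 0 < a) {v : E} (hv : ‖v‖ = 1) (p : ℝ) :
    ‖a • v‖ ^ (p - 2) • a • v = a ^ (p - 1) • v := by
  rw [norm_smul, norm_of_nonneg ha.le, hv, mul_one, smul_smul, rpow_sub_two_mul_self ha.ne']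

theorem vectorDiv_smul [FiniteDimensional ℝ E] {c : E → ℝ} {X : E → E} {x : E}
    (hc : DifferentiableAt ℝ c x) (hX : DifferentiableAt ℝ X x) :
    vectorDiv (fun y => c y • X y) x = c x * vectorDiv X x + fderiv ℝ c x (X x) := by
  rw [vectorDiv, fderiv_fun_smul hc hX]
  simp [vectorDiv]

theorem vectorDiv_comp_smul_gradient [FiniteDimensional ℝ E] {ψ : ℝ → ℝ} {ψ' : ℝ}
    {β : E → ℝ} {x : E} (hψ : HasDerivAt ψ ψ' (β x)) (hβ : DifferentiableAt ℝ β x)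
    (hgrad : DifferentiableAt ℝ (∇ β) x) :
    vectorDiv (fun y => ψ (β y) • ∇ β y) x = ψ (β x) * laplacian β x + ψ' * ‖∇ β x‖ ^ 2 := by
  have hψβ : HasGradientAt (ψ ∘ β) (ψ' • ∇ β x) x := hψ.comp_hasGradientAt hβ.hasGradientAt
  refine (vectorDiv_smul (c := ψ ∘ β) hψβ.differentiableAt hgrad).trans ?_
  rw [hψβ.fderiv_apply, real_inner_smul_left, real_inner_self_eq_norm_sq, laplacian]
  rfl

theorem pLaplacian_comp_of_norm_gradient_eq_one [FiniteDimensional ℝ E] (p : ℝ)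
    {φ φ' : ℝ → ℝ} {φ'' : ℝ} {β : E → ℝ} {x : E}
    (hφ : ∀ t, HasDerivAt φ (φ' t) t) (hφ'_pos : ∀ t, 0 < φ' t) (hφ' : HasDerivAt φ' φ'' (β x))
    (hβ : Differentiable ℝ β) (hgrad : DifferentiableAt ℝ (∇ β) x) (hβgrad : ∀ y, ‖∇ β y‖ = 1) :
    pLaplacian p (φ ∘ β) x
      = φ' (β x) ^ (p - 1) * laplacian β x + (p - 1) * φ' (β x) ^ (p - 2) * φ'' := by
  have hgrad_comp : ∇ (φ ∘ β) = fun y => φ' (β y) • ∇ β y :=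
    gradient_eq fun y => (hφ (β y)).comp_hasGradientAt (hβ y).hasGradientAt
  have hpow : HasDerivAt (fun t => φ' t ^ (p - 1)) (φ'' * (p - 1) * φ' (β x) ^ (p - 2)) (β x) := by
    convert hφ'.rpow_const (p := p - 1) (Or.inl (hφ'_pos _).ne') using 3
    ring
  rw [pLaplacian, hgrad_comp]
  simp_rw [rpow_norm_smul_smul_of_norm_eq_one (hφ'_pos _) (hβgrad _)]
  rw [vectorDiv_comp_smul_gradient hpow (hβ x) hgrad, hβgrad]
  ring

end

theorem pLaplacian_exp_smul_busemann_general
    {E : Type*} [NormedAddCommGroup E] [InnerProductSpace ℝ E] [FiniteDimensional ℝ E]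
    (p b : ℝ) (hb : 0 < b)
    (β : E → ℝ) (hβ : ContDiff ℝ 2 β) (hβgrad : ∀ x, ‖gradient β x‖ = 1) (x : E) :
    pLaplacian p (fun y => Real.exp (b * β y)) x
      = b ^ (p - 1) * Real.exp (b * (p - 1) * β x) * (laplacian β x + b * (p - 1)) := by
  have hexp (t : ℝ) : HasDerivAt (fun s => exp (b * s)) (b * exp (b * t)) t := by
    simpa [mul_comm] using ((hasDerivAt_id t).const_mul b).exp
  have key := pLaplacian_comp_of_norm_gradient_eq_one p (φ := fun t => exp (b * t)) hexp
    (fun t => by positivity) ((hexp (β x)).const_mul b)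
    (hβ.differentiable (by norm_num)) (hβ.differentiable_gradient x) hβgrad
  have hφ'_pow : (b * exp (b * β x)) ^ (p - 1) = b ^ (p - 1) * exp (b * (p - 1) * β x) := by
    rw [mul_rpow hb.le (exp_pos _).le, ← exp_mul]
    ring_nf
  have hφ'_step := rpow_sub_two_mul_self (a := b * exp (b * β x)) (by positivity) p
  refine key.trans ?_
  linear_combination (b * (p - 1)) * hφ'_step + (laplacian β x + b * (p - 1)) * hφ'_pow

theorem pLaplacian_exp_smul_busemann
    {E : Type*} [NormedAddCommGroup E] [InnerProductSpace ℝ E] [FiniteDimensional ℝ E]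
    (p b : ℝ) (hp : 2 ≤ p) (hb : 0 < b)
    (β : E → ℝ) (hβ : ContDiff ℝ 2 β) (hβgrad : ∀ x, ‖gradient β x‖ = 1) (x : E) :
    pLaplacian p (fun y => Real.exp (b * β y)) x
      = b ^ (p - 1) * Real.exp (b * (p - 1) * β x) * (laplacian β x + b * (p - 1)) :=
  pLaplacian_exp_smul_busemann_general p b hb β hβ hβgrad x
end

section
/- For every real number p ≥ 2 there exists a constant c > 0, depending only on p, such that for all vectors x and y in any real inner product space, ‖x + y‖^p ≤ ‖x‖^p + p · ‖x‖^{p-2} · ⟨x, y⟩ + c · ( ‖x‖^{p-2} ‖y‖^2 + ‖y‖^p ). -/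
open Real RealInnerProductSpace

universe u

/-! Write `α = p / 2`, so that `‖x + y‖ ^ p = (‖x‖ ^ 2 + d) ^ α` with
`d = 2 ⟪x, y⟫ + ‖y‖ ^ 2`. If `‖y‖ < ‖x‖`, the ratio `t = ‖x + y‖ ^ 2 / ‖x‖ ^ 2` lies in `(0, 4]`
and `d ^ 2 ≤ 9 ‖x‖ ^ 2 ‖y‖ ^ 2`, so it suffices to have a second-order Taylor bound
`t ^ α ≤ 1 + α (t - 1) + C (t - 1) ^ 2` on `(0, 4]`. By convexity (Bernoulli's inequality)
`t ^ α ≤ 1 + α t ^ (α - 1) (t - 1)`, and the error `(t ^ (α - 1) - 1) (t - 1)` is at most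
`(t ^ m - 1) (t - 1)` for the integer `m = ⌈α - 1⌉`, which is `(t - 1) ^ 2` times a geometric sum.
If `‖x‖ ≤ ‖y‖`, every term is crudely dominated by `‖y‖ ^ p`. -/

lemma pow_sub_one_mul_sub_one_le {t R : ℝ} (m : ℕ) (ht : 0 ≤ t) (htR : t ≤ R) :
    (t ^ m - 1) * (t - 1) ≤ (∑ i ∈ Finset.range m, R ^ i) * (t - 1) ^ 2 := by
  rw [← geom_sum_mul, mul_assoc, ← sq]
  gcongr with i

namespace Real

lemma rpow_le_one_add_mul_rpow_sub_one_mul {α t : ℝ} (hα : 1 ≤ α) (ht : 0 < t) :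
    t ^ α ≤ 1 + α * t ^ (α - 1) * (t - 1) := by
  have hbern := one_add_mul_self_le_rpow_one_add (by linarith [inv_pos.2 ht] : -1 ≤ t⁻¹ - 1) hα
  rw [add_sub_cancel, inv_rpow ht.le] at hbern
  have htα : 0 < t ^ α := rpow_pos_of_pos ht α
  have hmul := mul_le_mul_of_nonneg_left hbern htα.le
  rw [mul_inv_cancel₀ htα.ne'] at hmul
  have hexpand : t ^ α * (1 + α * (t⁻¹ - 1)) = t ^ α - α * (t ^ α / t) * (t - 1) := by
    field_simp
    ring
  rw [rpow_sub_one ht.ne']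
  linarith

lemma rpow_sub_one_mul_sub_one_le_ceil {β t : ℝ} (hβ : 0 ≤ β) (ht : 0 ≤ t) :
    (t ^ β - 1) * (t - 1) ≤ (t ^ ⌈β⌉₊ - 1) * (t - 1) := by
  rw [← rpow_natCast]
  rcases le_total t 1 with ht1 | ht1
  · exact mul_le_mul_of_nonpos_right
      (by linarith [rpow_le_rpow_of_exponent_ge' ht ht1 hβ (Nat.le_ceil β)]) (by linarith)
  · exact mul_le_mul_of_nonneg_right
      (by linarith [rpow_le_rpow_of_exponent_le ht1 (Nat.le_ceil β)]) (by linarith)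

lemma rpow_le_one_add_mul_sub_one_add_mul_sq {α t R : ℝ} (hα : 1 ≤ α) (ht : 0 < t) (htR : t ≤ R) :
    t ^ α ≤ 1 + α * (t - 1) + α * (∑ i ∈ Finset.range ⌈α - 1⌉₊, R ^ i) * (t - 1) ^ 2 := by
  have hrem := (rpow_sub_one_mul_sub_one_le_ceil (by linarith) ht.le).trans
    (pow_sub_one_mul_sub_one_le ⌈α - 1⌉₊ ht.le htR)
  calc t ^ α ≤ 1 + α * t ^ (α - 1) * (t - 1) := rpow_le_one_add_mul_rpow_sub_one_mul hα ht
    _ = 1 + α * (t - 1) + α * ((t ^ (α - 1) - 1) * (t - 1)) := by ring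
    _ ≤ _ := by
      rw [mul_assoc α]
      gcongr

lemma rpow_sub_two_mul_sq {x p : ℝ} (hx : 0 ≤ x) (hp : p ≠ 0) : x ^ (p - 2) * x ^ 2 = x ^ p := by
  rw [← rpow_add_natCast' hx (by simpa using hp)]
  norm_num

end Real

lemma abs_norm_add_sq_sub_norm_sq_le {E : Type*} [SeminormedAddCommGroup E] (x y : E) :
    |‖x + y‖ ^ 2 - ‖x‖ ^ 2| ≤ ‖y‖ * (2 * ‖x‖ + ‖y‖) := by
  have hdiff : |‖x + y‖ - ‖x‖| ≤ ‖y‖ := by simpa using abs_norm_sub_norm_le (x + y) x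
  have hsum : |‖x + y‖ + ‖x‖| ≤ 2 * ‖x‖ + ‖y‖ := by
    rw [abs_of_nonneg (by positivity)]
    linarith [norm_add_le x y]
  rw [show ‖x + y‖ ^ 2 - ‖x‖ ^ 2 = (‖x + y‖ - ‖x‖) * (‖x + y‖ + ‖x‖) by ring, abs_mul]
  exact mul_le_mul hdiff hsum (abs_nonneg _) (norm_nonneg y)

section InnerProductSpace

variable {F : Type*} [NormedAddCommGroup F] [InnerProductSpace ℝ F]

lemma norm_add_rpow_le_of_norm_lt_norm {p C : ℝ} (hp : p ≠ 0) (hC₀ : 0 ≤ C)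
    (hC : ∀ t : ℝ, 0 < t → t ≤ 4 → t ^ (p / 2) ≤ 1 + p / 2 * (t - 1) + C * (t - 1) ^ 2)
    {x y : F} (hyx : ‖y‖ < ‖x‖) :
    ‖x + y‖ ^ p ≤ ‖x‖ ^ p + p * ‖x‖ ^ (p - 2) * ⟪x, y⟫
      + (p / 2 + 9 * C) * (‖x‖ ^ (p - 2) * ‖y‖ ^ 2) := by
  have hx : 0 < ‖x‖ := (norm_nonneg y).trans_lt hyx
  have hxy : 0 < ‖x + y‖ := by
    have := norm_sub_norm_le x (-y)
    rw [norm_neg, sub_neg_eq_add] at this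
    linarith
  set d := ‖x + y‖ ^ 2 - ‖x‖ ^ 2 with hd
  have hd_inner : d = 2 * ⟪x, y⟫ + ‖y‖ ^ 2 := by rw [hd, norm_add_sq_real]; ring
  have hd_sq : d ^ 2 ≤ 9 * ‖y‖ ^ 2 * ‖x‖ ^ 2 := by
    have h3 : ‖y‖ * (2 * ‖x‖ + ‖y‖) ≤ 3 * ‖x‖ * ‖y‖ := by nlinarith [norm_nonneg y]
    nlinarith [sq_abs d, abs_nonneg d, abs_norm_add_sq_sub_norm_sq_le x y]
  set t := (‖x + y‖ / ‖x‖) ^ 2 with ht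
  have ht_sub_one : t - 1 = d / ‖x‖ ^ 2 := by rw [ht, hd]; field_simp
  have ht_le : t ≤ 4 := by
    rw [ht, div_pow, div_le_iff₀ (by positivity)]
    nlinarith [norm_add_le x y]
  have hxp : ‖x‖ ^ p = ‖x‖ ^ (p - 2) * ‖x‖ ^ 2 := (rpow_sub_two_mul_sq (norm_nonneg x) hp).symm
  calc ‖x + y‖ ^ p = ‖x‖ ^ p * t ^ (p / 2) := by
        rw [ht, ← rpow_natCast, ← rpow_mul (by positivity), div_rpow (norm_nonneg _) (norm_nonneg _)]
        norm_num
        field_simp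
    _ ≤ ‖x‖ ^ p * (1 + p / 2 * (t - 1) + C * (t - 1) ^ 2) := by
        gcongr
        exact hC t (by positivity) ht_le
    _ = ‖x‖ ^ p + p / 2 * ‖x‖ ^ (p - 2) * d + C * ‖x‖ ^ (p - 2) * (d ^ 2 / ‖x‖ ^ 2) := by
        rw [ht_sub_one, hxp]
        field_simp
    _ ≤ ‖x‖ ^ p + p / 2 * ‖x‖ ^ (p - 2) * d + C * ‖x‖ ^ (p - 2) * (9 * ‖y‖ ^ 2) := by
        gcongr
        rwa [div_le_iff₀ (by positivity)]
    _ = _ := by rw [hd_inner]; ring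

lemma norm_add_rpow_le_of_norm_le_norm {p : ℝ} (hp : 2 ≤ p) {x y : F} (hxy : ‖x‖ ≤ ‖y‖) :
    ‖x + y‖ ^ p ≤ ‖x‖ ^ p + p * ‖x‖ ^ (p - 2) * ⟪x, y⟫ + (2 ^ p + p) * ‖y‖ ^ p := by
  have hsum : ‖x + y‖ ^ p ≤ 2 ^ p * ‖y‖ ^ p := by
    rw [← mul_rpow zero_le_two (norm_nonneg y)]
    gcongr
    linarith [norm_add_le x y]
  have hinner : ‖x‖ ^ (p - 2) * |⟪x, y⟫| ≤ ‖y‖ ^ p :=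
    calc ‖x‖ ^ (p - 2) * |⟪x, y⟫| ≤ ‖y‖ ^ (p - 2) * ‖y‖ ^ 2 := by
          gcongr
          exact (abs_real_inner_le_norm x y).trans (by nlinarith [norm_nonneg x])
      _ = ‖y‖ ^ p := rpow_sub_two_mul_sq (norm_nonneg y) (by positivity)
  have hpx : 0 ≤ p * ‖x‖ ^ (p - 2) := by positivity
  nlinarith [neg_abs_le ⟪x, y⟫, rpow_nonneg (norm_nonneg x) p]

end InnerProductSpace

theorem norm_add_rpow_le
    (p : ℝ) (hp : 2 ≤ p) :
    ∃ c > (0 : ℝ), ∀ (F : Type u) [NormedAddCommGroup F] [InnerProductSpace ℝ F] (x y : F),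
      ‖x + y‖ ^ p ≤ ‖x‖ ^ p + p * ‖x‖ ^ (p - 2) * ⟪x, y⟫
        + c * (‖x‖ ^ (p - 2) * ‖y‖ ^ (2 : ℝ) + ‖y‖ ^ p) := by
  set C := p / 2 * ∑ i ∈ Finset.range ⌈p / 2 - 1⌉₊, (4 : ℝ) ^ i
  have hC₀ : 0 ≤ C := mul_nonneg (by linarith) (by positivity)
  have hC : ∀ t : ℝ, 0 < t → t ≤ 4 → t ^ (p / 2) ≤ 1 + p / 2 * (t - 1) + C * (t - 1) ^ 2 :=
    fun t ht ht4 => rpow_le_one_add_mul_sub_one_add_mul_sq (by linarith) ht ht4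
  have hsmall : 0 ≤ p / 2 + 9 * C := by linarith
  have hlarge : 0 ≤ 2 ^ p + p := by positivity
  refine ⟨2 ^ p + p + (p / 2 + 9 * C), by positivity, fun F _ _ x y => ?_⟩
  rw [rpow_two]
  have hA : 0 ≤ ‖x‖ ^ (p - 2) * ‖y‖ ^ 2 := by positivity
  have hB : 0 ≤ ‖y‖ ^ p := by positivity
  rcases lt_or_ge ‖y‖ ‖x‖ with hyx | hxy
  · linarith [norm_add_rpow_le_of_norm_lt_norm (by positivity) hC₀ hC hyx, mul_nonneg hlarge hA,
      mul_nonneg hlarge hB, mul_nonneg hsmall hB]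
  · linarith [norm_add_rpow_le_of_norm_le_norm hp hxy, mul_nonneg hlarge hA, mul_nonneg hsmall hA,
      mul_nonneg hsmall hB]
end
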